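/- An irrational real number ζ satisfies λ_1(ζ) = ∞ (i.e., is a Liouville number) if and only if for every positive integer k there exists a positive integer x with max_{1≤j≤k} ‖ζ^j x‖ < C_0(k, ζ)·x^{−1}, where C_0(k, ζ) = (1/2)·k^{−1}·(1+|ζ|)^{1−k}. -/

import Mathlib

/-- Distance from a real number to the nearest integer. -/
noncomputable def distNearestInt (a : ℝ) : ℝ := |a - round a|

/-- `max_{1 ≤ j ≤ k} ‖ζ^j x‖` for a positive integer `x`. -/
noncomputable def maxDist (k : ℕ) (ζ : ℝ) (x : ℕ) : ℝ :=
  ⨆ j ∈ Finset.Icc 1 k, distNearestInt (ζ ^ j * x)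

/-- The approximation constant `λ_k(ζ)`, as an extended real number in `[0,∞]`. -/
noncomputable def lambdaConst (k : ℕ) (ζ : ℝ) : EReal :=
  sSup (insert (0 : EReal) {e : EReal | ∃ η : ℝ, e = (η : EReal) ∧
    {x : ℕ | 0 < x ∧ 0 < maxDist k ζ x ∧ maxDist k ζ x ≤ (x : ℝ) ^ (-η)}.Infinite})

/-- The uniform approximation constant `λ̂_k(ζ)`, as an extended real number in `[0,∞]`. -/
noncomputable def lambdaHatConst (k : ℕ) (ζ : ℝ) : EReal :=
  sSup (insert (0 : EReal) {e : EReal | ∃ η : ℝ, e = (η : EReal) ∧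
    ∃ X₀ : ℝ, ∀ X : ℝ, X₀ ≤ X → ∃ x : ℕ, 1 ≤ x ∧ (x : ℝ) ≤ X ∧
      0 < maxDist k ζ x ∧ maxDist k ζ x ≤ X ^ (-η)})

/-- The dual approximation constant `w_k(ζ)`, as an extended real number in `[0,∞]`. -/
noncomputable def wConst (k : ℕ) (ζ : ℝ) : EReal :=
  sSup (insert (0 : EReal) {e : EReal | ∃ ν : ℝ, e = (ν : EReal) ∧
    ∀ X₀ : ℝ, ∃ X : ℝ, X₀ ≤ X ∧ ∃ p : Fin (k + 1) → ℤ,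
      (∀ j, |(p j : ℝ)| ≤ X) ∧
      0 < |∑ j : Fin (k + 1), ζ ^ (j : ℕ) * (p j : ℝ)| ∧
      |∑ j : Fin (k + 1), ζ ^ (j : ℕ) * (p j : ℝ)| ≤ X ^ (-ν)})

/-- The uniform dual approximation constant `ŵ_k(ζ)`, as an extended real number in `[0,∞]`. -/
noncomputable def wHatConst (k : ℕ) (ζ : ℝ) : EReal :=
  sSup (insert (0 : EReal) {e : EReal | ∃ ν : ℝ, e = (ν : EReal) ∧
    ∃ X₀ : ℝ, ∀ X : ℝ, X₀ ≤ X → ∃ p : Fin (k + 1) → ℤ,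
      (∀ j, |(p j : ℝ)| ≤ X) ∧
      0 < |∑ j : Fin (k + 1), ζ ^ (j : ℕ) * (p j : ℝ)| ∧
      |∑ j : Fin (k + 1), ζ ^ (j : ℕ) * (p j : ℝ)| ≤ X ^ (-ν)})

/-!
If `‖ζ x‖ ≤ x ^ (-2k)` and `p` is the integer nearest to `ζ x`, then `ζ ^ j x ^ k` lies within
`k (1 + |ζ|) ^ (k - 1) x ^ (k - 1) ‖ζ x‖ ≪ x ^ (-k - 1)` of the integer `p ^ j x ^ (k - j)`, so
`x ^ k` satisfies the simultaneous bound once `x` is large.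

Conversely, if every `ζ ^ j x` (`j ≤ k`) lies within `C₀(k, ζ) / x` of an integer `r_j`, the
constant is small enough to force the integer identities `x r_{j+1} = r_1 r_j`. Hence
`x ^ (k - 1) ∣ r_1 ^ k`, so the reduced denominator `B` of `r_1 / x` satisfies `B ^ k ≤ x`, and
`‖ζ B‖ ≤ |ζ x - r_1| B / x < C₀ B ^ (1 - 2k)`. Since `C₀(k, ζ) → 0` while `‖ζ b‖ > 0` for each
`b`, these denominators are unbounded, which gives `λ₁(ζ) = ∞`.
-/

open Finset

lemma distNearestInt_nonneg (a : ℝ) : 0 ≤ distNearestInt a := abs_nonneg _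

lemma distNearestInt_le_abs_sub (a : ℝ) (m : ℤ) : distNearestInt a ≤ |a - m| := round_le a m

lemma Irrational.distNearestInt_pos {a : ℝ} (h : Irrational a) : 0 < distNearestInt a :=
  abs_pos.2 (sub_ne_zero.2 (h.ne_int _))

section maxDist

variable {k : ℕ} {ζ : ℝ} {x : ℕ}

lemma maxDist_le {c : ℝ} (hc : 0 ≤ c) (h : ∀ j ∈ Icc 1 k, distNearestInt (ζ ^ j * x) ≤ c) :
    maxDist k ζ x ≤ c :=
  Real.iSup_le (fun j ↦ Real.iSup_le (h j) hc) hc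

lemma distNearestInt_le_maxDist {j : ℕ} (hj : j ∈ Icc 1 k) :
    distNearestInt (ζ ^ j * x) ≤ maxDist k ζ x := by
  have hbdd : BddAbove (Set.range fun i ↦ ⨆ _ : i ∈ Icc 1 k, distNearestInt (ζ ^ i * x)) :=
    ⟨1 / 2, Set.forall_mem_range.2 fun _ ↦ Real.iSup_le (fun _ ↦ abs_sub_round _) (by norm_num)⟩
  exact (ciSup_pos hj).ge.trans (le_ciSup hbdd j)

lemma maxDist_one : maxDist 1 ζ x = distNearestInt (ζ * x) := by
  refine le_antisymm (maxDist_le (distNearestInt_nonneg _) fun j hj ↦ ?_) ?_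
  · rw [Icc_self, mem_singleton] at hj
    rw [hj, pow_one]
  · simpa using distNearestInt_le_maxDist (k := 1) (ζ := ζ) (x := x) (j := 1) (by simp)

end maxDist

lemma lambdaConst_eq_top_iff (k : ℕ) (ζ : ℝ) :
    lambdaConst k ζ = ⊤ ↔ ∀ η : ℝ,
      {x : ℕ | 0 < x ∧ 0 < maxDist k ζ x ∧ maxDist k ζ x ≤ (x : ℝ) ^ (-η)}.Infinite := by
  rw [lambdaConst, sSup_eq_top]
  constructor
  · intro h η
    obtain ⟨e, he, hηe⟩ := h (max η 0 : ℝ) (EReal.coe_lt_top _)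
    rcases he with rfl | ⟨η', rfl, hinf⟩
    · exact absurd (EReal.coe_lt_coe_iff.1 hηe) (le_max_right η 0).not_gt
    have hηη' : η ≤ η' := (le_max_left η 0).trans (EReal.coe_lt_coe_iff.1 hηe).le
    refine hinf.mono ?_
    rintro x ⟨hx, hpos, hle⟩
    exact ⟨hx, hpos, hle.trans <|
      Real.rpow_le_rpow_of_exponent_le (by exact_mod_cast hx) (neg_le_neg hηη')⟩
  · intro h e he
    obtain ⟨η, hη, -⟩ := EReal.exists_between_coe_real he
    exact ⟨η, Or.inr ⟨η, rfl, h η⟩, hη⟩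

lemma lambdaConst_one_eq_top_iff {ζ : ℝ} (hζ : Irrational ζ) :
    lambdaConst 1 ζ = ⊤ ↔
      ∀ η : ℝ, {x : ℕ | 0 < x ∧ distNearestInt (ζ * x) ≤ (x : ℝ) ^ (-η)}.Infinite := by
  refine (lambdaConst_eq_top_iff 1 ζ).trans (forall_congr' fun η ↦ ?_)
  simp only [maxDist_one]
  refine Iff.of_eq (congrArg _ (Set.ext fun x ↦ and_congr_right fun (hx : 0 < x) ↦ ?_))
  exact and_iff_right (hζ.mul_natCast hx.ne').distNearestInt_pos

-- `approxConst n ζ` is the constant `C₀(n + 1, ζ)` of the statement.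
noncomputable def approxConst (n : ℕ) (ζ : ℝ) : ℝ := (2 * (n + 1) * (1 + |ζ|) ^ n)⁻¹

lemma approxConst_eq (n : ℕ) (ζ : ℝ) :
    1 / 2 * ((n + 1 : ℕ) : ℝ)⁻¹ * (1 + |ζ|) ^ (1 - ((n + 1 : ℕ) : ℤ)) = approxConst n ζ := by
  have h : (1 : ℤ) - (n + 1 : ℕ) = -(n : ℤ) := by push_cast; ring
  rw [approxConst, h, zpow_neg, zpow_natCast, mul_inv, mul_inv]
  push_cast
  ring

lemma approxConst_le_inv (n : ℕ) (ζ : ℝ) : approxConst n ζ ≤ ((n : ℝ) + 1)⁻¹ := by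
  refine inv_anti₀ (by positivity) ?_
  have h1 : (1 : ℝ) ≤ (1 + |ζ|) ^ n := one_le_pow₀ (le_add_of_nonneg_right (abs_nonneg ζ))
  nlinarith

lemma two_mul_pow_mul_approxConst_le (ζ : ℝ) {j n : ℕ} (hj : j ≤ n) :
    2 * (1 + |ζ|) ^ j * approxConst n ζ ≤ 1 := by
  rw [approxConst, ← div_eq_mul_inv, div_le_one (by positivity)]
  calc 2 * (1 + |ζ|) ^ j ≤ 2 * (1 + |ζ|) ^ n := by
        gcongr
        exact le_add_of_nonneg_right (abs_nonneg ζ)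
    _ ≤ 2 * (n + 1) * (1 + |ζ|) ^ n := by
        gcongr
        exact le_mul_of_one_le_right zero_le_two (le_add_of_nonneg_left n.cast_nonneg)

lemma distNearestInt_pow_mul_pow_le (ζ : ℝ) (x : ℕ) {j k : ℕ} (hj : 1 ≤ j) (hjk : j ≤ k) :
    distNearestInt (ζ ^ j * (x ^ k : ℕ)) ≤
      j * (1 + |ζ|) ^ (j - 1) * (x : ℝ) ^ (k - 1) * distNearestInt (ζ * x) := by
  set p : ℤ := round (ζ * (x : ℝ))
  have hM : max |ζ * (x : ℝ)| |(p : ℝ)| ≤ (1 + |ζ|) * (x : ℝ) := by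
    rcases x.eq_zero_or_pos with rfl | hx
    · simp [p]
    have hp : |(p : ℝ)| - |ζ * x| ≤ |ζ * x - p| := by
      rw [abs_sub_comm]; exact abs_sub_abs_le_abs_sub _ _
    have hp' : |ζ * x - p| ≤ 1 / 2 := abs_sub_round _
    have hx1 : (1 : ℝ) ≤ x := Nat.one_le_cast.2 hx
    have hζx : |ζ * x| = |ζ| * x := by rw [abs_mul, Nat.abs_cast]
    exact max_le (by nlinarith) (by nlinarith)
  calc distNearestInt (ζ ^ j * (x ^ k : ℕ))
      ≤ |ζ ^ j * (x ^ k : ℕ) - (p ^ j * x ^ (k - j) : ℤ)| := distNearestInt_le_abs_sub _ _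
    _ = |(ζ * (x : ℝ)) ^ j - (p : ℝ) ^ j| * (x : ℝ) ^ (k - j) := by
        have hxk : (x : ℝ) ^ k = x ^ j * x ^ (k - j) := by
          rw [← pow_add, Nat.add_sub_cancel' hjk]
        rw [← abs_of_nonneg (by positivity : 0 ≤ (x : ℝ) ^ (k - j)), ← abs_mul]
        push_cast
        rw [hxk]
        ring_nf
    _ ≤ |ζ * (x : ℝ) - p| * j * ((1 + |ζ|) * (x : ℝ)) ^ (j - 1) * (x : ℝ) ^ (k - j) := by
        gcongr
        exact (abs_pow_sub_pow_le ..).trans (by gcongr)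
    _ = j * (1 + |ζ|) ^ (j - 1) * (x : ℝ) ^ (k - 1) * distNearestInt (ζ * x) := by
        rw [mul_pow, show k - 1 = j - 1 + (k - j) by omega, pow_add]
        simp only [distNearestInt, p]
        ring

lemma maxDist_pow_le (n : ℕ) (ζ : ℝ) (x : ℕ) :
    maxDist (n + 1) ζ (x ^ (n + 1)) ≤
      (n + 1) * (1 + |ζ|) ^ n * (x : ℝ) ^ n * distNearestInt (ζ * x) := by
  refine maxDist_le (mul_nonneg (by positivity) (distNearestInt_nonneg _)) fun j hj ↦ ?_
  obtain ⟨hj1, hjn⟩ := mem_Icc.1 hj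
  refine (distNearestInt_pow_mul_pow_le ζ x hj1 hjn).trans ?_
  rw [Nat.add_sub_cancel]
  gcongr
  · exact distNearestInt_nonneg _
  · exact_mod_cast hjn
  · exact le_add_of_nonneg_right (abs_nonneg ζ)
  · omega

lemma exists_maxDist_lt_approxConst_of_forall_infinite {ζ : ℝ}
    (h : ∀ η : ℝ, {x : ℕ | 0 < x ∧ distNearestInt (ζ * x) ≤ (x : ℝ) ^ (-η)}.Infinite) (n : ℕ) :
    ∃ x : ℕ, 0 < x ∧ maxDist (n + 1) ζ x < approxConst n ζ * (x : ℝ)⁻¹ := by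
  set P := (1 + |ζ|) ^ n
  obtain ⟨N, hN⟩ := exists_nat_gt (2 * (n + 1) ^ 2 * P ^ 2)
  obtain ⟨x, ⟨hx, hδ⟩, hxN⟩ := (h (2 * n + 2 : ℕ)).exists_gt N
  have hx0 : (0 : ℝ) < x := Nat.cast_pos.2 hx
  have hPx : 2 * (n + 1) ^ 2 * P ^ 2 < x := hN.trans (Nat.cast_lt.2 hxN)
  rw [Real.rpow_neg hx0.le, Real.rpow_natCast] at hδ
  refine ⟨x ^ (n + 1), pow_pos hx _, ?_⟩
  calc maxDist (n + 1) ζ (x ^ (n + 1))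
      ≤ (n + 1) * P * (x : ℝ) ^ n * distNearestInt (ζ * x) := maxDist_pow_le n ζ x
    _ ≤ (n + 1) * P * (x : ℝ) ^ n * ((x : ℝ) ^ (2 * n + 2))⁻¹ := by gcongr
    _ = (n + 1) * P / x * ((x : ℝ) ^ (n + 1))⁻¹ := by
        field_simp
        ring
    _ < approxConst n ζ * ((x : ℝ) ^ (n + 1))⁻¹ := by
        gcongr
        rw [approxConst, div_lt_iff₀ hx0, inv_mul_eq_div, lt_div_iff₀ (by positivity)]
        linarith
    _ = approxConst n ζ * ((x ^ (n + 1) : ℕ) : ℝ)⁻¹ := by push_cast; rfl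

lemma mul_pow_eq_pow_succ_of_mul_eq {R : Type*} [CommMonoid R] {x : R} {r : ℕ → R} {n : ℕ}
    (h : ∀ j < n, x * r (j + 2) = r 1 * r (j + 1)) : r (n + 1) * x ^ n = r 1 ^ (n + 1) := by
  induction n with
  | zero => simp
  | succ n ih =>
    calc r (n + 2) * x ^ (n + 1) = x * r (n + 2) * x ^ n := by rw [pow_succ]; ac_rfl
      _ = r 1 * (r (n + 1) * x ^ n) := by rw [h n n.lt_add_one, mul_assoc]
      _ = r 1 ^ (n + 2) := by rw [ih fun j hj ↦ h j (hj.trans n.lt_add_one), ← pow_succ']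

lemma Int.exists_pow_le_of_pow_dvd_pow {a x : ℤ} (hx : 0 < x) {n : ℕ}
    (h : x ^ n ∣ a ^ (n + 1)) : ∃ d A B : ℤ, 0 < B ∧ a = A * d ∧ x = B * d ∧ B ^ n ≤ d := by
  obtain ⟨g, A, B, hg, hAB, rfl, rfl⟩ :=
    Int.exists_gcd_one' (Int.gcd_pos_of_ne_zero_right a hx.ne')
  have hg' : (0 : ℤ) < g := Nat.cast_pos.2 hg
  have hB : 0 < B := pos_of_mul_pos_left hx hg'.le
  refine ⟨g, A, B, hB, rfl, rfl, Int.le_of_dvd hg' ?_⟩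
  have hdvd : (g : ℤ) ^ n * B ^ n ∣ (g : ℤ) ^ n * (g * A ^ (n + 1)) := by
    convert h using 1 <;> ring
  exact ((Int.isCoprime_iff_gcd_eq_one.2 hAB).symm.pow).dvd_of_dvd_mul_right
    ((mul_dvd_mul_iff_left (pow_ne_zero n hg'.ne')).1 hdvd)

lemma natCast_mul_eq_of_abs_sub_lt {ζ c : ℝ} {x j : ℕ} (hx : 0 < x) (hj : 1 ≤ j)
    (hc : 2 * (1 + |ζ|) ^ j * c ≤ 1) {r₁ rⱼ r : ℤ} (h₁ : |ζ * x - r₁| < c / x)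
    (hⱼ : |ζ ^ j * x - rⱼ| < c / x) (h : |ζ ^ (j + 1) * x - r| < c / x) :
    x * r = r₁ * rⱼ := by
  have hx0 : (0 : ℝ) < x := Nat.cast_pos.2 hx
  have hxe : (x : ℝ) * (c / x) = c := mul_div_cancel₀ c hx0.ne'
  have hc0 : 0 < c := by
    have := (abs_nonneg _).trans_lt h₁
    rwa [div_pos_iff_of_pos_right hx0] at this
  have hxc : c / x ≤ c := div_le_self hc0.le (Nat.one_le_cast.2 hx)
  have hpow : 2 + |ζ| + |ζ| ^ j ≤ 2 * (1 + |ζ|) ^ j := by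
    have h1 := pow_add_pow_le zero_le_one (abs_nonneg ζ) (by omega : j ≠ 0)
    have h2 := le_self_pow₀ (le_add_of_nonneg_right (abs_nonneg ζ) : (1 : ℝ) ≤ 1 + |ζ|)
      (by omega : j ≠ 0)
    rw [one_pow] at h1
    linarith
  have hc1 : c ≤ 1 := by
    have := one_le_pow₀ (le_add_of_nonneg_right (abs_nonneg ζ) : (1 : ℝ) ≤ 1 + |ζ|) (n := j)
    nlinarith
  have hrⱼ : |(rⱼ : ℝ)| ≤ |ζ| ^ j * x + c / x := by
    have := abs_sub_abs_le_abs_sub (rⱼ : ℝ) (ζ ^ j * x)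
    rw [abs_sub_comm, abs_mul, abs_pow, Nat.abs_cast] at this
    linarith
  have T₁ : (x : ℝ) * |ζ ^ (j + 1) * x - r| < c := hxe ▸ mul_lt_mul_of_pos_left h hx0
  have T₂ : |ζ| * x * |ζ ^ j * x - rⱼ| ≤ |ζ| * c :=
    calc _ ≤ |ζ| * x * (c / x) := by gcongr
      _ = |ζ| * c := by rw [mul_assoc, hxe]
  have T₃ : |(rⱼ : ℝ)| * |ζ * x - r₁| ≤ |ζ| ^ j * c + c * c :=
    calc _ ≤ (|ζ| ^ j * x + c / x) * (c / x) := by gcongr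
      _ = |ζ| ^ j * (x * (c / x)) + c / x * (c / x) := by ring
      _ ≤ |ζ| ^ j * c + c * c := by rw [hxe]; gcongr
  suffices |((x * r - r₁ * rⱼ : ℤ) : ℝ)| < 1 by
    exact sub_eq_zero.1 (Int.abs_lt_one_iff.1 (by exact_mod_cast this))
  have hid : ((x * r - r₁ * rⱼ : ℤ) : ℝ) =
      -(x * (ζ ^ (j + 1) * x - r)) + ζ * x * (ζ ^ j * x - rⱼ) + rⱼ * (ζ * x - r₁) := by
    push_cast
    ring
  rw [hid]
  refine (abs_add_three _ _ _).trans_lt ?_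
  rw [abs_neg, abs_mul, abs_mul, abs_mul, abs_mul, Nat.abs_cast]
  nlinarith [mul_le_mul_of_nonneg_left hpow hc0.le, mul_le_mul_of_nonneg_left hc1 hc0.le]

lemma exists_distNearestInt_lt_of_maxDist_lt {ζ : ℝ} {n x : ℕ} (hx : 0 < x)
    (h : maxDist (n + 1) ζ x < approxConst n ζ * (x : ℝ)⁻¹) :
    ∃ b : ℕ, 0 < b ∧ distNearestInt (ζ * b) < approxConst n ζ / (b : ℝ) ^ (2 * n + 1) := by
  set c := approxConst n ζ
  set r : ℕ → ℤ := fun j ↦ round (ζ ^ j * x)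
  have hr : ∀ j, 1 ≤ j → j ≤ n + 1 → |ζ ^ j * x - r j| < c / x := fun j hj₁ hj₂ ↦
    (distNearestInt_le_maxDist (mem_Icc.2 ⟨hj₁, hj₂⟩)).trans_lt h
  have hrec : ∀ j < n, (x : ℤ) * r (j + 2) = r 1 * r (j + 1) := fun j hj ↦
    natCast_mul_eq_of_abs_sub_lt hx (by omega) (two_mul_pow_mul_approxConst_le ζ hj)
      (by simpa using hr 1 le_rfl (by omega)) (hr (j + 1) (by omega) (by omega))
      (hr (j + 2) (by omega) (by omega))
  obtain ⟨d, A, B, hB, hA, hxB, hBd⟩ := Int.exists_pow_le_of_pow_dvd_pow (Int.natCast_pos.2 hx)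
    (Dvd.intro_left _ (mul_pow_eq_pow_succ_of_mul_eq hrec))
  lift B to ℕ using hB.le
  refine ⟨B, Int.natCast_pos.1 hB, ?_⟩
  have hc : 0 < c := by simp only [c, approxConst]; positivity
  have hxR : (x : ℝ) = B * d := by exact_mod_cast hxB
  have hAR : (r 1 : ℝ) = A * d := by exact_mod_cast hA
  have hd : (0 : ℝ) < d := by
    exact_mod_cast pos_of_mul_pos_right (hxB ▸ Int.natCast_pos.2 hx) hB.le
  have hBd' : (B : ℝ) ^ n ≤ d := by exact_mod_cast hBd
  have hBpos : (0 : ℝ) < B := by exact_mod_cast hB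
  calc distNearestInt (ζ * B) ≤ |ζ * B - A| := distNearestInt_le_abs_sub _ _
    _ = |ζ ^ 1 * x - r 1| / d := by
        rw [hxR, hAR, pow_one, ← mul_assoc, ← sub_mul, abs_mul, abs_of_pos hd,
          mul_div_cancel_right₀ _ hd.ne']
    _ < c / x / d := by gcongr; exact hr 1 le_rfl (by omega)
    _ = c / (B * d ^ 2) := by rw [hxR, div_div]; ring
    _ ≤ c / B ^ (2 * n + 1) := by
        gcongr
        calc (B : ℝ) ^ (2 * n + 1) = B * ((B : ℝ) ^ n) ^ 2 := by ring
          _ ≤ B * d ^ 2 := by gcongr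

lemma Irrational.exists_pos_forall_le_distNearestInt {ζ : ℝ} (hζ : Irrational ζ) (N : ℕ) :
    ∃ ε > 0, ∀ b ∈ Icc 1 N, ε ≤ distNearestInt (ζ * b) := by
  have hb : ∀ b ∈ Icc 1 N, ∀ᶠ ε in nhdsWithin (0 : ℝ) (Set.Ioi 0), ε ≤ distNearestInt (ζ * b) :=
    fun b hb ↦ nhdsWithin_le_nhds <| eventually_le_nhds <|
      (hζ.mul_natCast (by have := (mem_Icc.1 hb).1; omega)).distNearestInt_pos
  exact (eventually_mem_nhdsWithin.and ((Filter.eventually_all_finset _).2 hb)).exists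

lemma Irrational.forall_infinite_of_forall_exists_maxDist_lt {ζ : ℝ} (hζ : Irrational ζ)
    (H : ∀ n : ℕ, ∃ x : ℕ, 0 < x ∧ maxDist (n + 1) ζ x < approxConst n ζ * (x : ℝ)⁻¹) (η : ℝ) :
    {b : ℕ | 0 < b ∧ distNearestInt (ζ * b) ≤ (b : ℝ) ^ (-η)}.Infinite := by
  refine Set.infinite_of_forall_exists_gt fun N ↦ ?_
  obtain ⟨ε, hε, hεN⟩ := hζ.exists_pos_forall_le_distNearestInt N
  obtain ⟨n, hn⟩ := exists_nat_gt (max ε⁻¹ η)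
  obtain ⟨x, hx, hmax⟩ := H n
  obtain ⟨b, hb, hbδ⟩ := exists_distNearestInt_lt_of_maxDist_lt hx hmax
  have hb1 : (1 : ℝ) ≤ b := Nat.one_le_cast.2 hb
  have hc : approxConst n ζ ≤ ((n : ℝ) + 1)⁻¹ := approxConst_le_inv n ζ
  have hδ : distNearestInt (ζ * b) < ((n : ℝ) + 1)⁻¹ / (b : ℝ) ^ (2 * n + 1) :=
    hbδ.trans_le (by gcongr)
  have hδε : distNearestInt (ζ * b) < ε := by
    refine hδ.trans_le ((div_le_self (by positivity) (one_le_pow₀ hb1)).trans ?_)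
    rw [inv_le_comm₀ (by positivity) hε]
    linarith [le_max_left ε⁻¹ η]
  refine ⟨b, ⟨hb, ?_⟩, ?_⟩
  · calc distNearestInt (ζ * b) ≤ 1 / (b : ℝ) ^ (2 * n + 1) :=
          hδ.le.trans (by gcongr; exact inv_le_one_of_one_le₀ (by linarith))
      _ = (b : ℝ) ^ (-((2 * n + 1 : ℕ) : ℝ)) := by
          rw [Real.rpow_neg (by positivity), Real.rpow_natCast, one_div]
      _ ≤ (b : ℝ) ^ (-η) :=
          Real.rpow_le_rpow_of_exponent_le hb1 (by push_cast; linarith [le_max_right ε⁻¹ η])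
  · by_contra! hbN
    exact (hεN b (mem_Icc.2 ⟨hb, hbN⟩)).not_gt hδε

theorem stmt18 (ζ : ℝ) (hirr : Irrational ζ) :
    lambdaConst 1 ζ = ⊤ ↔
      ∀ k : ℕ, 0 < k → ∃ x : ℕ, 0 < x ∧
        maxDist k ζ x < (1 / 2 * (k : ℝ)⁻¹ * (1 + |ζ|) ^ (1 - (k : ℤ))) * (x : ℝ)⁻¹ := by
  rw [lambdaConst_one_eq_top_iff hirr]
  constructor
  · intro h k hk
    obtain ⟨n, rfl⟩ := Nat.exists_eq_add_one_of_ne_zero hk.ne'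
    rw [approxConst_eq]
    exact exists_maxDist_lt_approxConst_of_forall_infinite h n
  · intro H
    refine hirr.forall_infinite_of_forall_exists_maxDist_lt fun n ↦ ?_
    rw [← approxConst_eq]
    exact H (n + 1) n.succ_pos
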